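/- Let g be the symmetric bilinear form on ℝ⁵ whose matrix in the frame (X, ∂_u, V₁, V₂, 2∂_t + ∂_z) is [[0,1,0,0,0],[1,0,0,0,0],[0,0,1,0,0],[0,0,0,1,0],[0,0,0,0,1]], where X = sin(2u) V₁ + 2 sin²(u) ∂_t - cos²(u) ∂_z, V₁ = cos t ∂_x + sin t(∂_y + x ∂_z), V₂ = -sin t ∂_x + cos t(∂_y + x ∂_z). Then at every point of ℝ⁵ this bilinear form is nondegenerate of signature (4,1) (Lorentzian), and g(X, X) = 0 everywhere, i.e. X is lightlike. -/

import Mathlib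

/-!
In the frame `F = (X, ∂_u, V₁, V₂, 2∂_t + ∂_z)` the form `g` has Gram matrix `J₀`, so `X = F e₀`
gives `g(X, X) = (J₀)₀₀ = 0`. The form `w ↦ 2 w₀ w₁ + w₂² + w₃² + w₄²` of `J₀` is positive
definite on the hyperplane `w₀ = w₁`, so `g` is positive definite on a hyperplane and has at
most one negative eigenvalue. Since `det g = det J₀ / (det F)² = -1/4 < 0`, it has exactly one
negative eigenvalue and no zero eigenvalue.
-/

open Real Matrix

/-- Coordinate vector of Thurston's vector field
`X = sin(2u) V₁ + 2sin²(u) ∂_t - cos²(u) ∂_z` at `p = (x,y,z,t,u)`. -/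
noncomputable def Xvec (p : Fin 5 → ℝ) : Fin 5 → ℝ :=
  ![Real.sin (2 * p 4) * Real.cos (p 3),
    Real.sin (2 * p 4) * Real.sin (p 3),
    Real.sin (2 * p 4) * (p 0 * Real.sin (p 3)) - Real.cos (p 4) ^ 2,
    2 * Real.sin (p 4) ^ 2,
    0]

/-- The matrix whose columns are the frame `(X, ∂_u, V₁, V₂, 2∂_t + ∂_z)`
at `p = (x,y,z,t,u)`. -/
noncomputable def frameMat (p : Fin 5 → ℝ) : Matrix (Fin 5) (Fin 5) ℝ :=
  (Matrix.of
    ![Xvec p,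
      ![0, 0, 0, 0, 1],
      ![Real.cos (p 3), Real.sin (p 3), p 0 * Real.sin (p 3), 0, 0],
      ![-Real.sin (p 3), Real.cos (p 3), p 0 * Real.cos (p 3), 0, 0],
      ![0, 0, 1, 2, 0]])ᵀ

/-- The Gram matrix prescribed for the frame `(X, ∂_u, V₁, V₂, 2∂_t+∂_z)`. -/
noncomputable def J₀ : Matrix (Fin 5) (Fin 5) ℝ :=
  !![0, 1, 0, 0, 0;
     1, 0, 0, 0, 0;
     0, 0, 1, 0, 0;
     0, 0, 0, 1, 0;
     0, 0, 0, 0, 1]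

/-- The coordinate matrix of the metric `g` whose matrix in the frame
`(X, ∂_u, V₁, V₂, 2∂_t+∂_z)` is `J₀`. -/
noncomputable def gMat (p : Fin 5 → ℝ) : Matrix (Fin 5) (Fin 5) ℝ :=
  ((frameMat p)⁻¹)ᵀ * J₀ * (frameMat p)⁻¹

namespace Matrix.IsHermitian

variable {ι : Type*} [Fintype ι] [DecidableEq ι] {A : Matrix ι ι ℝ} (hA : A.IsHermitian)
include hA

lemma dotProduct_eigenvectorBasis (i j : ι) :
    ⇑(hA.eigenvectorBasis i) ⬝ᵥ ⇑(hA.eigenvectorBasis j) = if i = j then 1 else 0 := by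
  rw [← hA.eigenvectorBasis.inner_eq_ite, EuclideanSpace.inner_eq_star_dotProduct, star_trivial,
    dotProduct_comm]

lemma dotProduct_mulVec_smul_add_smul_eigenvectorBasis {i j : ι} (hij : i ≠ j) (a b : ℝ) :
    let v := a • ⇑(hA.eigenvectorBasis i) + b • ⇑(hA.eigenvectorBasis j)
    v ⬝ᵥ A *ᵥ v = a ^ 2 * hA.eigenvalues i + b ^ 2 * hA.eigenvalues j := by
  simp only [mulVec_add, mulVec_smul, mulVec_eigenvectorBasis, add_dotProduct, dotProduct_add,
    smul_dotProduct, dotProduct_smul, dotProduct_eigenvectorBasis, hij, hij.symm, if_true,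
    if_false, smul_eq_mul]
  ring

lemma smul_add_smul_eigenvectorBasis_ne_zero {i j : ι} (hij : i ≠ j) {a b : ℝ}
    (hab : a ≠ 0 ∨ b ≠ 0) :
    a • ⇑(hA.eigenvectorBasis i) + b • ⇑(hA.eigenvectorBasis j) ≠ 0 := by
  intro hv
  have hi := congrArg (· ⬝ᵥ ⇑(hA.eigenvectorBasis i)) hv
  have hj := congrArg (· ⬝ᵥ ⇑(hA.eigenvectorBasis j)) hv
  simp only [add_dotProduct, smul_dotProduct, dotProduct_eigenvectorBasis, hij, hij.symm,
    if_true, if_false, smul_eq_mul, zero_dotProduct] at hi hj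
  rcases hab with ha | hb
  · exact ha (by linarith)
  · exact hb (by linarith)

/-- Two eigenvectors with negative eigenvalues would span a plane on which the form is negative
definite, and this plane meets the kernel of `φ`. -/
lemma eq_of_eigenvalues_neg (φ : (ι → ℝ) →ₗ[ℝ] ℝ)
    (hφ : ∀ v, v ≠ 0 → φ v = 0 → 0 < v ⬝ᵥ A *ᵥ v) {i j : ι}
    (hi : hA.eigenvalues i < 0) (hj : hA.eigenvalues j < 0) : i = j := by
  by_contra hij
  set x := φ (hA.eigenvectorBasis i)
  set y := φ (hA.eigenvectorBasis j)
  obtain ⟨a, b, hab, hφab⟩ : ∃ a b : ℝ, (a ≠ 0 ∨ b ≠ 0) ∧ a * x + b * y = 0 := by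
    by_cases hx : x = 0
    · exact ⟨1, 0, Or.inl one_ne_zero, by simp [hx]⟩
    · exact ⟨y, -x, Or.inr (neg_ne_zero.2 hx), by ring⟩
  have hpos :=
    hφ _ (hA.smul_add_smul_eigenvectorBasis_ne_zero hij hab) (by simpa [x, y] using hφab)
  rw [hA.dotProduct_mulVec_smul_add_smul_eigenvectorBasis hij] at hpos
  rcases hab with ha | hb
  · nlinarith [sq_pos_of_ne_zero ha, sq_nonneg b]
  · nlinarith [sq_pos_of_ne_zero hb, sq_nonneg a]

lemma exists_eigenvalues_neg_of_det_neg (hdet : A.det < 0) : ∃ i, hA.eigenvalues i < 0 := by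
  by_contra! h
  rw [hA.det_eq_prod_eigenvalues] at hdet
  exact hdet.not_ge (Finset.prod_nonneg fun i _ => h i)

lemma eigenvalues_ne_zero_of_det_ne_zero (hdet : A.det ≠ 0) (i : ι) : hA.eigenvalues i ≠ 0 := by
  rw [hA.det_eq_prod_eigenvalues] at hdet
  exact Finset.prod_ne_zero_iff.1 hdet i (Finset.mem_univ i)

theorem card_eigenvalues_of_det_neg (hdet : A.det < 0) (φ : (ι → ℝ) →ₗ[ℝ] ℝ)
    (hφ : ∀ v, v ≠ 0 → φ v = 0 → 0 < v ⬝ᵥ A *ᵥ v) :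
    Nat.card {i // 0 < hA.eigenvalues i} = Fintype.card ι - 1 ∧
      Nat.card {i // hA.eigenvalues i < 0} = 1 := by
  obtain ⟨i₀, hi₀⟩ := hA.exists_eigenvalues_neg_of_det_neg hdet
  have hneg : ∀ j, hA.eigenvalues j < 0 ↔ j = i₀ :=
    fun j => ⟨fun hj => hA.eq_of_eigenvalues_neg φ hφ hj hi₀, fun e => e ▸ hi₀⟩
  have hpos : ∀ j, 0 < hA.eigenvalues j ↔ ¬ j = i₀ := fun j => by
    rw [← hneg, not_lt, lt_iff_le_and_ne, ne_comm,
      and_iff_left (hA.eigenvalues_ne_zero_of_det_ne_zero hdet.ne j)]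
  simp only [Nat.card_congr (Equiv.subtypeEquivRight hpos),
    Nat.card_congr (Equiv.subtypeEquivRight hneg), Nat.card_eq_fintype_card,
    Fintype.card_subtype_compl, Fintype.card_subtype_eq, and_self]

end Matrix.IsHermitian

lemma Matrix.dotProduct_transpose_mul_mul_mulVec {ι R : Type*} [Fintype ι] [CommSemiring R]
    (B J : Matrix ι ι R) (v : ι → R) :
    v ⬝ᵥ (Bᵀ * J * B) *ᵥ v = (B *ᵥ v) ⬝ᵥ J *ᵥ (B *ᵥ v) := by
  rw [← mulVec_mulVec, ← mulVec_mulVec, dotProduct_mulVec, vecMul_transpose]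

lemma frameMat_det (p : Fin 5 → ℝ) : (frameMat p).det = 2 := by
  rw [frameMat, det_transpose]
  simp [det_succ_row_zero, Fin.sum_univ_succ, Xvec, Fin.succAbove]
  linear_combination 2 * (sin (p 4) ^ 2 + cos (p 4) ^ 2) * sin_sq_add_cos_sq (p 3) +
    2 * sin_sq_add_cos_sq (p 4)

lemma isUnit_frameMat_det (p : Fin 5 → ℝ) : IsUnit (frameMat p).det := by
  simp [frameMat_det]

lemma J₀_det : J₀.det = -1 := by
  simp [J₀, det_succ_row_zero, Fin.sum_univ_succ, Fin.succAbove]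

lemma J₀_isHermitian : J₀.IsHermitian :=
  isHermitian_iff_isSymm.2 <| by ext i j; fin_cases i <;> fin_cases j <;> rfl

lemma dotProduct_J₀_mulVec (w : Fin 5 → ℝ) :
    w ⬝ᵥ J₀ *ᵥ w = 2 * w 0 * w 1 + w 2 ^ 2 + w 3 ^ 2 + w 4 ^ 2 := by
  simp only [dotProduct, mulVec, J₀, of_apply, cons_val', cons_val_fin_one, Fin.sum_univ_five,
    cons_val_zero, cons_val_one, cons_val, zero_mul, one_mul, zero_add, add_zero]
  ring

lemma dotProduct_J₀_mulVec_pos {w : Fin 5 → ℝ} (hw : w ≠ 0) (h01 : w 0 = w 1) :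
    0 < w ⬝ᵥ J₀ *ᵥ w := by
  rw [dotProduct_J₀_mulVec, ← h01]
  have hw' : w 0 ≠ 0 ∨ w 2 ≠ 0 ∨ w 3 ≠ 0 ∨ w 4 ≠ 0 := by
    contrapose! hw
    ext k; fin_cases k <;> simp [hw, ← h01]
  rcases hw' with h | h | h | h <;>
    nlinarith [sq_pos_of_ne_zero h, sq_nonneg (w 0), sq_nonneg (w 2), sq_nonneg (w 3),
      sq_nonneg (w 4)]

lemma gMat_det (p : Fin 5 → ℝ) : (gMat p).det = -4⁻¹ := by
  rw [gMat, det_mul, det_mul, det_transpose, det_nonsing_inv, frameMat_det, J₀_det,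
    Ring.inverse_eq_inv']
  norm_num

lemma gMat_isHermitian (p : Fin 5 → ℝ) : (gMat p).IsHermitian := by
  rw [gMat, ← conjTranspose_eq_transpose_of_trivial]
  exact isHermitian_conjTranspose_mul_mul _ J₀_isHermitian

lemma dotProduct_gMat_mulVec (p v : Fin 5 → ℝ) :
    v ⬝ᵥ gMat p *ᵥ v = ((frameMat p)⁻¹ *ᵥ v) ⬝ᵥ J₀ *ᵥ ((frameMat p)⁻¹ *ᵥ v) :=
  dotProduct_transpose_mul_mul_mulVec _ _ v

lemma inv_frameMat_mulVec_Xvec (p : Fin 5 → ℝ) : (frameMat p)⁻¹ *ᵥ Xvec p = Pi.single 0 1 := by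
  have hX : frameMat p *ᵥ Pi.single 0 1 = Xvec p := by
    rw [mulVec_single_one]; rfl
  rw [← hX, mulVec_mulVec, nonsing_inv_mul _ (isUnit_frameMat_det p), one_mulVec]

lemma dotProduct_gMat_mulVec_pos {p v : Fin 5 → ℝ} (hv : v ≠ 0)
    (h01 : ((frameMat p)⁻¹ *ᵥ v) 0 = ((frameMat p)⁻¹ *ᵥ v) 1) : 0 < v ⬝ᵥ gMat p *ᵥ v := by
  have hinj := mulVec_injective_of_isUnit <|
    isUnit_nonsing_inv_iff.2 <| (isUnit_iff_isUnit_det _).2 (isUnit_frameMat_det p)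
  rw [dotProduct_gMat_mulVec]
  exact dotProduct_J₀_mulVec_pos (by simpa using hinj.ne hv) h01

/-- At every point of `ℝ⁵` the frame is a basis, the bilinear form `g` is
nondegenerate of Lorentzian signature `(4,1)`, and `g(X,X) = 0`, i.e. `X` is
lightlike. -/
theorem lightlike_metric (p : Fin 5 → ℝ) :
    (frameMat p).det ≠ 0 ∧
    (gMat p).det ≠ 0 ∧
    (∃ h : (gMat p).IsHermitian,
      Nat.card {i : Fin 5 // 0 < h.eigenvalues i} = 4 ∧
      Nat.card {i : Fin 5 // h.eigenvalues i < 0} = 1) ∧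
    Xvec p ⬝ᵥ (gMat p).mulVec (Xvec p) = 0 := by
  have hg := gMat_isHermitian p
  have hgdet : (gMat p).det < 0 := by rw [gMat_det]; norm_num
  let φ : (Fin 5 → ℝ) →ₗ[ℝ] ℝ :=
    (LinearMap.proj (R := ℝ) (φ := fun _ : Fin 5 => ℝ) 0 - LinearMap.proj 1) ∘ₗ
      (frameMat p)⁻¹.mulVecLin
  have hφ : ∀ v, v ≠ 0 → φ v = 0 → 0 < v ⬝ᵥ gMat p *ᵥ v := fun v hv hφv =>
    dotProduct_gMat_mulVec_pos hv (sub_eq_zero.1 hφv)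
  refine ⟨(isUnit_frameMat_det p).ne_zero, hgdet.ne, ⟨hg, ?_⟩, ?_⟩
  · simpa using hg.card_eigenvalues_of_det_neg hgdet φ hφ
  · rw [dotProduct_gMat_mulVec, inv_frameMat_mulVec_Xvec, dotProduct_J₀_mulVec]
    simp
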